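/- arXiv:2107.06434 — 5 statements merged into one kernel-verified Lean document; each statement's English description precedes it below -/
import Mathlib

section
/- Let D and D̂ be two Dec-POMDPs (equivalently, two MDPs over joint histories) with the same state space, action space, and discount factor γ ∈ [0,1), differing only in their reward functions R, R̂ and transition functions P, P̂. Suppose rewards lie in [0, Rmax] so that values satisfy 0 ≤ V ≤ Vmax = Rmax/(1−γ). If |R̂(s,a) − R(s,a)| ≤ ε_R and ‖P̂(·|s,a) − P(·|s,a)‖₁ ≤ ε_P for all (s,a), then for every (joint) policy π, ‖V_D^π − V_{D̂}^π‖_∞ ≤ ε_R/(1−γ) + γ·ε_P·Vmax/(2(1−γ)). -/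
/-- Simulation Lemma, Part 1: if two (Dec-)MDPs differ only in rewards (within `ε_R`) and
transitions (within `ε_P` in L1), then for every policy `π`,
`‖V_D^π − V_{D̂}^π‖_∞ ≤ ε_R/(1−γ) + γ ε_P Vmax/(2(1−γ))` where `Vmax = Rmax/(1−γ)`. -/
theorem simulation_lemma_policy {S A : Type*} [Fintype S] [Fintype A] [Nonempty S]
    (γ Rmax : ℝ) (hγ0 : 0 ≤ γ) (hγ1 : γ < 1) (hRmax : 0 ≤ Rmax)
    (R Rhat : S → A → ℝ) (P Phat : S → A → S → ℝ)
    (hRb : ∀ s a, 0 ≤ R s a ∧ R s a ≤ Rmax) (hRhatb : ∀ s a, 0 ≤ Rhat s a ∧ Rhat s a ≤ Rmax)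
    (hPpos : ∀ s a s', 0 ≤ P s a s') (hPsum : ∀ s a, ∑ s', P s a s' = 1)
    (hPhatpos : ∀ s a s', 0 ≤ Phat s a s') (hPhatsum : ∀ s a, ∑ s', Phat s a s' = 1)
    (εR εP : ℝ)
    (hεR : ∀ s a, |Rhat s a - R s a| ≤ εR)
    (hεP : ∀ s a, ∑ s', |Phat s a s' - P s a s'| ≤ εP)
    (π : S → A) (V Vhat : S → ℝ)
    (hV : ∀ s, V s = R s (π s) + γ * ∑ s', P s (π s) s' * V s')
    (hVhat : ∀ s, Vhat s = Rhat s (π s) + γ * ∑ s', Phat s (π s) s' * Vhat s') :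
    ∀ s, |V s - Vhat s| ≤ εR / (1 - γ) + γ * εP * (Rmax / (1 - γ)) / (2 * (1 - γ)) := by
  have h1γ : (0:ℝ) < 1 - γ := by linarith
  set Vmax : ℝ := Rmax / (1 - γ) with hVmaxdef
  have hVmax0 : 0 ≤ Vmax := div_nonneg hRmax h1γ.le
  -- bounds on Vhat
  obtain ⟨s1, -, hs1⟩ := Finset.exists_max_image Finset.univ Vhat Finset.univ_nonempty
  obtain ⟨s0, -, hs0⟩ := Finset.exists_min_image Finset.univ Vhat Finset.univ_nonempty
  have hub : Vhat s1 ≤ Vmax := by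
    have hsum : ∑ s', Phat s1 (π s1) s' * Vhat s' ≤ Vhat s1 := by
      calc ∑ s', Phat s1 (π s1) s' * Vhat s'
          ≤ ∑ s', Phat s1 (π s1) s' * Vhat s1 :=
            Finset.sum_le_sum fun i _ =>
              mul_le_mul_of_nonneg_left (hs1 i (Finset.mem_univ i)) (hPhatpos _ _ _)
        _ = Vhat s1 := by rw [← Finset.sum_mul, hPhatsum, one_mul]
    have h1 : Vhat s1 ≤ Rmax + γ * Vhat s1 := by
      have := hVhat s1
      nlinarith [(hRhatb s1 (π s1)).2]
    rw [hVmaxdef, le_div_iff₀ h1γ]; nlinarith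
  have hlb : 0 ≤ Vhat s0 := by
    have hsum : Vhat s0 ≤ ∑ s', Phat s0 (π s0) s' * Vhat s' := by
      calc Vhat s0 = ∑ s', Phat s0 (π s0) s' * Vhat s0 := by
            rw [← Finset.sum_mul, hPhatsum, one_mul]
        _ ≤ ∑ s', Phat s0 (π s0) s' * Vhat s' :=
            Finset.sum_le_sum fun i _ =>
              mul_le_mul_of_nonneg_left (hs0 i (Finset.mem_univ i)) (hPhatpos _ _ _)
    have := hVhat s0
    nlinarith [(hRhatb s0 (π s0)).1]
  have hVhatb : ∀ s, |Vhat s - Vmax / 2| ≤ Vmax / 2 := by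
    intro s
    have h1 : Vhat s ≤ Vmax := le_trans (hs1 s (Finset.mem_univ s)) hub
    have h2 : 0 ≤ Vhat s := le_trans hlb (hs0 s (Finset.mem_univ s))
    rw [abs_le]; constructor <;> linarith
  -- contraction argument
  obtain ⟨t, -, ht⟩ := Finset.exists_max_image Finset.univ (fun s => |V s - Vhat s|)
    Finset.univ_nonempty
  set M : ℝ := |V t - Vhat t| with hMdef
  have hMnn : 0 ≤ M := abs_nonneg _
  set a : A := π t with hadef
  set S1 : ℝ := ∑ s', P t a s' * (V s' - Vhat s') with hS1def
  set S2 : ℝ := ∑ s', (P t a s' - Phat t a s') * (Vhat s' - Vmax / 2) with hS2def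
  have e1 : S1 + S2 = (∑ s', P t a s' * V s') - ∑ s', Phat t a s' * Vhat s' := by
    rw [hS1def, hS2def, ← Finset.sum_add_distrib]
    have : ∀ s', P t a s' * (V s' - Vhat s') + (P t a s' - Phat t a s') * (Vhat s' - Vmax / 2)
        = (P t a s' * V s' - Phat t a s' * Vhat s')
          - (P t a s' * (Vmax / 2) - Phat t a s' * (Vmax / 2)) := fun s' => by ring
    rw [Finset.sum_congr rfl fun s' _ => this s']
    rw [Finset.sum_sub_distrib, Finset.sum_sub_distrib, Finset.sum_sub_distrib,
      ← Finset.sum_mul, ← Finset.sum_mul, hPsum, hPhatsum]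
    ring
  have key : V t - Vhat t = (R t a - Rhat t a) + γ * S1 + γ * S2 := by
    have := hV t; have := hVhat t
    rw [hV t, hVhat t]
    have : γ * S1 + γ * S2 = γ * (S1 + S2) := by ring
    rw [add_assoc, this, e1]; ring
  have hS1b : |S1| ≤ M := by
    calc |S1| ≤ ∑ s', |P t a s' * (V s' - Vhat s')| := Finset.abs_sum_le_sum_abs _ _
      _ ≤ ∑ s', P t a s' * M := by
          refine Finset.sum_le_sum fun i _ => ?_
          rw [abs_mul, abs_of_nonneg (hPpos _ _ _)]
          exact mul_le_mul_of_nonneg_left (ht i (Finset.mem_univ i)) (hPpos _ _ _)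
      _ = M := by rw [← Finset.sum_mul, hPsum, one_mul]
  have hS2b : |S2| ≤ εP * (Vmax / 2) := by
    calc |S2| ≤ ∑ s', |(P t a s' - Phat t a s') * (Vhat s' - Vmax / 2)| :=
          Finset.abs_sum_le_sum_abs _ _
      _ ≤ ∑ s', |Phat t a s' - P t a s'| * (Vmax / 2) := by
          refine Finset.sum_le_sum fun i _ => ?_
          rw [abs_mul, abs_sub_comm]
          exact mul_le_mul_of_nonneg_left (hVhatb i) (abs_nonneg _)
      _ = (∑ s', |Phat t a s' - P t a s'|) * (Vmax / 2) := by rw [Finset.sum_mul]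
      _ ≤ εP * (Vmax / 2) := by
          apply mul_le_mul_of_nonneg_right (hεP t a)
          positivity
  have hRb' : |R t a - Rhat t a| ≤ εR := by rw [abs_sub_comm]; exact hεR t a
  have hM : M ≤ εR + γ * M + γ * (εP * (Vmax / 2)) := by
    calc M = |(R t a - Rhat t a) + γ * S1 + γ * S2| := by rw [hMdef, key]
      _ ≤ |R t a - Rhat t a| + |γ * S1| + |γ * S2| :=
          le_trans (abs_add_le _ _) (by gcongr; exact abs_add_le _ _)
      _ ≤ εR + γ * M + γ * (εP * (Vmax / 2)) := by
          rw [abs_mul, abs_mul, abs_of_nonneg hγ0]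
          gcongr
  have hMle : M ≤ εR / (1 - γ) + γ * εP * (Rmax / (1 - γ)) / (2 * (1 - γ)) := by
    have h2 : M * (1 - γ) ≤ εR + γ * (εP * (Vmax / 2)) := by nlinarith
    have h3 : εR / (1 - γ) + γ * εP * (Rmax / (1 - γ)) / (2 * (1 - γ))
        = (εR + γ * (εP * (Vmax / 2))) / (1 - γ) := by
      rw [hVmaxdef]; field_simp
    rw [h3, le_div_iff₀ h1γ]
    linarith
  intro s
  exact le_trans (ht s (Finset.mem_univ s)) hMle
end

section
/- Let D and D̂ be two MDPs differing only in rewards (R vs R̂) and transitions (P vs P̂), with discount γ ∈ [0,1) and values in [0, Vmax]. If |R̂(s,a) − R(s,a)| ≤ ε_R and ‖P̂(·|s,a) − P(·|s,a)‖₁ ≤ ε_P for all (s,a), then the optimal value functions satisfy ‖V_D^* − V_{D̂}^*‖_∞ ≤ ε_R/(1−γ) + γ·ε_P·Vmax/(2(1−γ)). -/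
/-- Simulation Lemma, Part 2: if two MDPs differ only in rewards (within `ε_R`) and
transitions (within `ε_P` in L1), with values in `[0, Vmax]`, then their optimal value
functions satisfy `‖V_D^* − V_{D̂}^*‖_∞ ≤ ε_R/(1−γ) + γ ε_P Vmax/(2(1−γ))`. -/
theorem simulation_lemma_optimal {S A : Type*} [Fintype S] [Fintype A] [Nonempty S] [Nonempty A]
    (γ Vmax : ℝ) (hγ0 : 0 ≤ γ) (hγ1 : γ < 1) (hVmax : 0 ≤ Vmax)
    (R Rhat : S → A → ℝ) (P Phat : S → A → S → ℝ)
    (hPpos : ∀ s a s', 0 ≤ P s a s') (hPsum : ∀ s a, ∑ s', P s a s' = 1)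
    (hPhatpos : ∀ s a s', 0 ≤ Phat s a s') (hPhatsum : ∀ s a, ∑ s', Phat s a s' = 1)
    (εR εP : ℝ)
    (hεR : ∀ s a, |Rhat s a - R s a| ≤ εR)
    (hεP : ∀ s a, ∑ s', |Phat s a s' - P s a s'| ≤ εP)
    (Vstar Vhatstar : S → ℝ)
    (hVb : ∀ s, 0 ≤ Vstar s ∧ Vstar s ≤ Vmax)
    (hVhatb : ∀ s, 0 ≤ Vhatstar s ∧ Vhatstar s ≤ Vmax)
    (hV : ∀ s, Vstar s = Finset.univ.sup' Finset.univ_nonempty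
        (fun a : A => R s a + γ * ∑ s', P s a s' * Vstar s'))
    (hVhat : ∀ s, Vhatstar s = Finset.univ.sup' Finset.univ_nonempty
        (fun a : A => Rhat s a + γ * ∑ s', Phat s a s' * Vhatstar s')) :
    ∀ s, |Vstar s - Vhatstar s| ≤ εR / (1 - γ) + γ * εP * Vmax / (2 * (1 - γ)) := by
  set M : ℝ := Finset.univ.sup' Finset.univ_nonempty (fun s : S => |Vstar s - Vhatstar s|)
    with hM
  have hMle : ∀ s : S, |Vstar s - Vhatstar s| ≤ M := fun s =>
    Finset.le_sup' (fun s : S => |Vstar s - Vhatstar s|) (Finset.mem_univ s)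
  have hM0 : 0 ≤ M := le_trans (abs_nonneg _) (hMle Classical.ofNonempty)
  -- inner bound
  have hinner : ∀ s a, |(∑ s', P s a s' * Vstar s') - ∑ s', Phat s a s' * Vhatstar s'|
      ≤ εP * Vmax / 2 + M := by
    intro s a
    have hsplit : (∑ s', P s a s' * Vstar s') - ∑ s', Phat s a s' * Vhatstar s'
        = (∑ s', (P s a s' - Phat s a s') * (Vhatstar s' - Vmax / 2))
          + ∑ s', P s a s' * (Vstar s' - Vhatstar s') := by
      rw [← Finset.sum_add_distrib]
      have : ∀ s' : S, (P s a s' - Phat s a s') * (Vhatstar s' - Vmax / 2)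
          + P s a s' * (Vstar s' - Vhatstar s')
          = (P s a s' * Vstar s' - Phat s a s' * Vhatstar s')
            - (Vmax / 2) * (P s a s' - Phat s a s') := by intro s'; ring
      rw [Finset.sum_congr rfl (fun s' _ => this s')]
      rw [Finset.sum_sub_distrib, ← Finset.mul_sum, Finset.sum_sub_distrib,
        Finset.sum_sub_distrib, hPsum, hPhatsum]
      ring
    rw [hsplit]
    have h1 : |∑ s', (P s a s' - Phat s a s') * (Vhatstar s' - Vmax / 2)| ≤ εP * Vmax / 2 := by
      calc |∑ s', (P s a s' - Phat s a s') * (Vhatstar s' - Vmax / 2)|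
          ≤ ∑ s', |(P s a s' - Phat s a s') * (Vhatstar s' - Vmax / 2)| :=
            Finset.abs_sum_le_sum_abs _ _
        _ ≤ ∑ s', |Phat s a s' - P s a s'| * (Vmax / 2) := by
            apply Finset.sum_le_sum
            intro s' _
            rw [abs_mul, abs_sub_comm (P s a s')]
            apply mul_le_mul_of_nonneg_left _ (abs_nonneg _)
            rw [abs_le]
            constructor <;> [linarith [(hVhatb s').1]; linarith [(hVhatb s').2]]
        _ = (∑ s', |Phat s a s' - P s a s'|) * (Vmax / 2) := by
            rw [Finset.sum_mul]
        _ ≤ εP * (Vmax / 2) := by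
            apply mul_le_mul_of_nonneg_right (hεP s a) (by linarith)
        _ = εP * Vmax / 2 := by ring
    have h2 : |∑ s', P s a s' * (Vstar s' - Vhatstar s')| ≤ M := by
      calc |∑ s', P s a s' * (Vstar s' - Vhatstar s')|
          ≤ ∑ s', |P s a s' * (Vstar s' - Vhatstar s')| := Finset.abs_sum_le_sum_abs _ _
        _ ≤ ∑ s', P s a s' * M := by
            apply Finset.sum_le_sum
            intro s' _
            rw [abs_mul, abs_of_nonneg (hPpos s a s')]
            exact mul_le_mul_of_nonneg_left (hMle s') (hPpos s a s')
        _ = M := by rw [← Finset.sum_mul, hPsum, one_mul]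
    calc |(∑ s', (P s a s' - Phat s a s') * (Vhatstar s' - Vmax / 2))
          + ∑ s', P s a s' * (Vstar s' - Vhatstar s')|
        ≤ _ + _ := abs_add_le _ _
      _ ≤ εP * Vmax / 2 + M := add_le_add h1 h2
  -- per-action, per-state bound
  have hkey : ∀ s : S, |Vstar s - Vhatstar s| ≤ εR + γ * (εP * Vmax / 2 + M) := by
    intro s
    set c : ℝ := εR + γ * (εP * Vmax / 2 + M) with hc
    have hab : ∀ a : A, |(R s a + γ * ∑ s', P s a s' * Vstar s')
        - (Rhat s a + γ * ∑ s', Phat s a s' * Vhatstar s')| ≤ c := by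
      intro a
      have := hεR s a
      have h2 := hinner s a
      have h3 : |(R s a + γ * ∑ s', P s a s' * Vstar s')
          - (Rhat s a + γ * ∑ s', Phat s a s' * Vhatstar s')|
          ≤ |R s a - Rhat s a|
            + γ * |(∑ s', P s a s' * Vstar s') - ∑ s', Phat s a s' * Vhatstar s'| := by
        have : (R s a + γ * ∑ s', P s a s' * Vstar s')
            - (Rhat s a + γ * ∑ s', Phat s a s' * Vhatstar s')
            = (R s a - Rhat s a)
              + γ * ((∑ s', P s a s' * Vstar s') - ∑ s', Phat s a s' * Vhatstar s') := by ring
        rw [this]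
        refine le_trans (abs_add_le _ _) ?_
        rw [abs_mul, abs_of_nonneg hγ0]
      have hR : |R s a - Rhat s a| ≤ εR := by rw [abs_sub_comm]; exact hεR s a
      have hmul := mul_le_mul_of_nonneg_left h2 hγ0
      rw [hc]
      linarith
    rw [hV s, hVhat s, abs_le]
    constructor
    · rw [neg_le, neg_sub]
      rw [sub_le_iff_le_add]
      apply Finset.sup'_le
      intro a _
      have : (Rhat s a + γ * ∑ s', Phat s a s' * Vhatstar s')
          ≤ (R s a + γ * ∑ s', P s a s' * Vstar s') + c := by
        have := hab a
        rw [abs_le] at this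
        linarith [this.1]
      refine le_trans this ?_
      have := Finset.le_sup' (fun a : A => R s a + γ * ∑ s', P s a s' * Vstar s') (Finset.mem_univ a)
      linarith
    · rw [sub_le_iff_le_add]
      apply Finset.sup'_le
      intro a _
      have : (R s a + γ * ∑ s', P s a s' * Vstar s')
          ≤ (Rhat s a + γ * ∑ s', Phat s a s' * Vhatstar s') + c := by
        have := hab a
        rw [abs_le] at this
        linarith [this.2]
      refine le_trans this ?_
      have := Finset.le_sup' (fun a : A => Rhat s a + γ * ∑ s', Phat s a s' * Vhatstar s') (Finset.mem_univ a)
      linarith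
  have hMb : M ≤ εR + γ * (εP * Vmax / 2 + M) := by
    apply Finset.sup'_le
    intro s _
    exact hkey s
  have hfin : M ≤ εR / (1 - γ) + γ * εP * Vmax / (2 * (1 - γ)) := by
    have h1γ : 0 < 1 - γ := by linarith
    rw [div_add_div _ _ (ne_of_gt h1γ) (by positivity : (2 * (1 - γ) : ℝ) ≠ 0), le_div_iff₀ (by positivity)]
    nlinarith [hMb]
  intro s
  exact le_trans (hMle s) hfin
end

section
/- Let D and D_K be two finite-horizon (or discounted) decision processes that agree exactly (in transitions and rewards) on a subset K ⊆ S×A of state-action pairs, where rewards lie in [0, Rmax] so that any trajectory's discounted return lies in [0, Vmax]. For a trajectory τ, let escape_K(τ) = 1 if τ contains at least one state-action pair outside K. Then for any policy π, |J_D(π) − J_{D_K}(π)| ≤ Vmax · P_D[escape_K(τ) | π], provided J_{D_K}(π) ≥ J_D(π) (optimism). -/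
/-- Induced Inequality Lemma: if `D` and `D_K` agree (in law and return) on trajectories
that never escape `K`, returns lie in `[0, Vmax]`, and `J_{D_K}(π) ≥ J_D(π)` (optimism),
then `|J_D(π) − J_{D_K}(π)| ≤ Vmax · P_D[escape]`. -/
theorem induced_inequality {Traj : Type*} [Fintype Traj]
    (escape : Traj → Prop) [DecidablePred escape]
    (PD PDK : Traj → ℝ) (RD RDK : Traj → ℝ) (Vmax : ℝ)
    (hPD : ∀ τ, 0 ≤ PD τ) (hPDK : ∀ τ, 0 ≤ PDK τ)
    (hPDsum : ∑ τ, PD τ = 1) (hPDKsum : ∑ τ, PDK τ = 1)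
    (hRD : ∀ τ, 0 ≤ RD τ ∧ RD τ ≤ Vmax)
    (hRDK : ∀ τ, 0 ≤ RDK τ ∧ RDK τ ≤ Vmax)
    (hagreeP : ∀ τ, ¬ escape τ → PD τ = PDK τ)
    (hagreeR : ∀ τ, ¬ escape τ → RD τ = RDK τ)
    (hopt : ∑ τ, PD τ * RD τ ≤ ∑ τ, PDK τ * RDK τ) :
    |(∑ τ, PD τ * RD τ) - ∑ τ, PDK τ * RDK τ| ≤
      Vmax * ∑ τ ∈ Finset.univ.filter (fun τ => escape τ), PD τ := by
  classical
  set S := Finset.univ.filter (fun τ => escape τ) with hS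
  have hsplit : ∀ f : Traj → ℝ, ∑ τ, f τ =
      ∑ τ ∈ S, f τ + ∑ τ ∈ Finset.univ.filter (fun τ => ¬ escape τ), f τ := by
    intro f
    exact (Finset.sum_filter_add_sum_filter_not Finset.univ _ f).symm
  -- non-escape parts agree
  have hne : ∀ τ ∈ Finset.univ.filter (fun τ => ¬ escape τ),
      PD τ * RD τ = PDK τ * RDK τ := by
    intro τ hτ
    simp only [Finset.mem_filter] at hτ
    rw [hagreeP τ hτ.2, hagreeR τ hτ.2]
  have hneP : ∀ τ ∈ Finset.univ.filter (fun τ => ¬ escape τ), PD τ = PDK τ := by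
    intro τ hτ
    simp only [Finset.mem_filter] at hτ
    exact hagreeP τ hτ.2
  have hPeq : ∑ τ ∈ S, PDK τ = ∑ τ ∈ S, PD τ := by
    have h1 := hsplit PD
    have h2 := hsplit PDK
    rw [hPDsum] at h1
    rw [hPDKsum] at h2
    have := Finset.sum_congr rfl hneP
    linarith
  rw [abs_sub_comm, abs_of_nonneg (by linarith)]
  have hdiff : (∑ τ, PDK τ * RDK τ) - ∑ τ, PD τ * RD τ =
      (∑ τ ∈ S, PDK τ * RDK τ) - ∑ τ ∈ S, PD τ * RD τ := by
    rw [hsplit (fun τ => PD τ * RD τ), hsplit (fun τ => PDK τ * RDK τ),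
      Finset.sum_congr rfl hne]
    ring
  rw [hdiff]
  have h1 : ∑ τ ∈ S, PDK τ * RDK τ ≤ Vmax * ∑ τ ∈ S, PDK τ := by
    rw [Finset.mul_sum]
    apply Finset.sum_le_sum
    intro τ _
    rw [mul_comm (Vmax)]
    exact mul_le_mul_of_nonneg_left (hRDK τ).2 (hPDK τ)
  have h2 : 0 ≤ ∑ τ ∈ S, PD τ * RD τ :=
    Finset.sum_nonneg fun τ _ => mul_nonneg (hPD τ) (hRD τ).1
  rw [hPeq] at h1
  linarith
end

section
/- Let T_D and T_{D̂} be Bellman optimality operators over a finite state-action space with common discount γ, rewards R, R̂ and transitions P, P̂. If |R(s,a) − R̂(s,a)| ≤ ε_R and ‖P(·|s,a) − P̂(·|s,a)‖₁ ≤ ε_P for all (s,a), and V : S → [0, Vmax], then ‖T_D V − T_{D̂} V‖_∞ ≤ ε_R + γ·ε_P·Vmax/2. -/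
lemma abs_sup'_sub_sup'_le {A : Type*} (s : Finset A) (hs : s.Nonempty)
    (f g : A → ℝ) (c : ℝ) (h : ∀ a ∈ s, |f a - g a| ≤ c) :
    |s.sup' hs f - s.sup' hs g| ≤ c := by
  rw [abs_sub_le_iff]
  constructor
  · rw [sub_le_iff_le_add]
    apply Finset.sup'_le
    intro a ha
    have := (abs_sub_le_iff.mp (h a ha)).1
    have := Finset.le_sup' g ha
    linarith
  · rw [sub_le_iff_le_add]
    apply Finset.sup'_le
    intro a ha
    have := (abs_sub_le_iff.mp (h a ha)).2
    have := Finset.le_sup' f ha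
    linarith

/-- One-step Bellman operator comparison: if rewards differ by at most `ε_R` and transitions
by at most `ε_P` in L1, and `V : S → [0, Vmax]`, then
`‖T_D V − T_{D̂} V‖_∞ ≤ ε_R + γ ε_P Vmax/2`. -/
theorem bellman_operator_diff {S A : Type*} [Fintype S] [Fintype A] [Nonempty A]
    (γ Vmax : ℝ) (hγ0 : 0 ≤ γ) (hγ1 : γ < 1) (hVmax : 0 ≤ Vmax)
    (R Rhat : S → A → ℝ) (P Phat : S → A → S → ℝ)
    (hPpos : ∀ s a s', 0 ≤ P s a s') (hPsum : ∀ s a, ∑ s', P s a s' = 1)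
    (hPhatpos : ∀ s a s', 0 ≤ Phat s a s') (hPhatsum : ∀ s a, ∑ s', Phat s a s' = 1)
    (εR εP : ℝ)
    (hεR : ∀ s a, |R s a - Rhat s a| ≤ εR)
    (hεP : ∀ s a, ∑ s', |P s a s' - Phat s a s'| ≤ εP)
    (V : S → ℝ) (hV : ∀ s, 0 ≤ V s ∧ V s ≤ Vmax) :
    ∀ s, |Finset.univ.sup' Finset.univ_nonempty
            (fun a : A => R s a + γ * ∑ s', P s a s' * V s') -
          Finset.univ.sup' Finset.univ_nonempty
            (fun a : A => Rhat s a + γ * ∑ s', Phat s a s' * V s')| ≤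
      εR + γ * εP * Vmax / 2 := by
  intro s
  apply abs_sup'_sub_sup'_le
  intro a _
  have key : (∑ s', P s a s' * V s') - (∑ s', Phat s a s' * V s')
      = ∑ s', (P s a s' - Phat s a s') * (V s' - Vmax / 2) := by
    have h1 : ∑ s', (P s a s' - Phat s a s') * (V s' - Vmax / 2)
        = (∑ s', P s a s' * V s') - (∑ s', Phat s a s' * V s')
          - ((∑ s', P s a s') - (∑ s', Phat s a s')) * (Vmax / 2) := by
      simp only [sub_mul, mul_sub, Finset.sum_sub_distrib, Finset.sum_mul]
    rw [h1, hPsum, hPhatsum]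
    ring
  have hsum : |(∑ s', P s a s' * V s') - (∑ s', Phat s a s' * V s')| ≤ εP * (Vmax / 2) := by
    rw [key]
    calc |∑ s', (P s a s' - Phat s a s') * (V s' - Vmax / 2)|
        ≤ ∑ s', |(P s a s' - Phat s a s') * (V s' - Vmax / 2)| :=
          Finset.abs_sum_le_sum_abs _ _
      _ ≤ ∑ s', |P s a s' - Phat s a s'| * (Vmax / 2) := by
          apply Finset.sum_le_sum
          intro i _
          rw [abs_mul]
          apply mul_le_mul_of_nonneg_left _ (abs_nonneg _)
          rw [abs_le]
          have := hV i
          constructor <;> linarith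
      _ = (∑ s', |P s a s' - Phat s a s'|) * (Vmax / 2) := by rw [Finset.sum_mul]
      _ ≤ εP * (Vmax / 2) := by
          apply mul_le_mul_of_nonneg_right (hεP s a); linarith
  have hr := hεR s a
  have : |(R s a + γ * ∑ s', P s a s' * V s') -
      (Rhat s a + γ * ∑ s', Phat s a s' * V s')|
      ≤ |R s a - Rhat s a| + γ * |(∑ s', P s a s' * V s') - (∑ s', Phat s a s' * V s')| := by
    have h1 : (R s a + γ * ∑ s', P s a s' * V s') -
        (Rhat s a + γ * ∑ s', Phat s a s' * V s')
        = (R s a - Rhat s a) + γ * ((∑ s', P s a s' * V s') - (∑ s', Phat s a s' * V s')) := by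
      ring
    rw [h1]
    calc _ ≤ |R s a - Rhat s a| + |γ * ((∑ s', P s a s' * V s') - (∑ s', Phat s a s' * V s'))| :=
          abs_add_le _ _
      _ = _ := by rw [abs_mul, abs_of_nonneg hγ0]
    
  have hγP : γ * |(∑ s', P s a s' * V s') - (∑ s', Phat s a s' * V s')| ≤ γ * (εP * (Vmax / 2)) :=
    mul_le_mul_of_nonneg_left hsum hγ0
  calc _ ≤ _ := this
    _ ≤ εR + γ * (εP * (Vmax / 2)) := by linarith
    _ = εR + γ * εP * Vmax / 2 := by ring
end

section
/- In the K-known MDP D_K (where every (s,a) ∉ K has reward Rmax and self-loop transition, and (s,a) ∈ K matches the true MDP D), every policy π satisfies V_{D_K}^π(s) ≥ V_D^π(s) for all states s, provided all rewards of D lie in [0, Rmax]. -/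
/-- Optimism: in the K-known MDP `D_K` (reward `Rmax` and self-loop outside `K`, matching
`D` on `K`), every policy satisfies `V_{D_K}^π(s) ≥ V_D^π(s)` for all `s`, provided
rewards of `D` lie in `[0, Rmax]`. -/
theorem optimism_known_mdp {S A : Type*} [Fintype S] [Fintype A] [Nonempty S] [DecidableEq S] [DecidableEq A]
    (γ Rmax : ℝ) (hγ0 : 0 ≤ γ) (hγ1 : γ < 1) (hRmax : 0 ≤ Rmax)
    (R : S → A → ℝ) (hR : ∀ s a, 0 ≤ R s a ∧ R s a ≤ Rmax)
    (P : S → A → S → ℝ) (hPpos : ∀ s a s', 0 ≤ P s a s')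
    (hPsum : ∀ s a, ∑ s', P s a s' = 1)
    (K : Finset (S × A))
    (RK : S → A → ℝ) (PK : S → A → S → ℝ)
    (hRK : ∀ s a, RK s a = if (s, a) ∈ K then R s a else Rmax)
    (hPK : ∀ s a s', PK s a s' = if (s, a) ∈ K then P s a s' else (if s' = s then 1 else 0))
    (π : S → A) (VD VDK : S → ℝ)
    (hVD : ∀ s, VD s = R s (π s) + γ * ∑ s', P s (π s) s' * VD s')
    (hVDK : ∀ s, VDK s = RK s (π s) + γ * ∑ s', PK s (π s) s' * VDK s') :
    ∀ s, VD s ≤ VDK s := by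
  intro s
  -- minimizer of the difference
  obtain ⟨s0, -, hmin⟩ := Finset.exists_min_image Finset.univ
    (fun t => VDK t - VD t) ⟨s, Finset.mem_univ s⟩
  have hmin' : ∀ t, VDK s0 - VD s0 ≤ VDK t - VD t := fun t => hmin t (Finset.mem_univ t)
  suffices h : 0 ≤ VDK s0 - VD s0 by linarith [hmin' s]
  -- upper bound on VD: maximizer
  obtain ⟨s1, -, hmax⟩ := Finset.exists_max_image Finset.univ VD ⟨s, Finset.mem_univ s⟩
  have hmax' : ∀ t, VD t ≤ VD s1 := fun t => hmax t (Finset.mem_univ t)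
  have hVDbound : (1 - γ) * VD s1 ≤ Rmax := by
    have e := hVD s1
    have hsum : ∑ s', P s1 (π s1) s' * VD s' ≤ VD s1 := by
      calc ∑ s', P s1 (π s1) s' * VD s'
          ≤ ∑ s', P s1 (π s1) s' * VD s1 := by
            apply Finset.sum_le_sum
            intro i _
            exact mul_le_mul_of_nonneg_left (hmax' i) (hPpos _ _ _)
        _ = VD s1 := by rw [← Finset.sum_mul, hPsum, one_mul]
    have hR1 := (hR s1 (π s1)).2
    nlinarith
  by_cases hk : (s0, π s0) ∈ K
  · -- contraction argument at the minimizer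
    have e1 := hVD s0
    have e2 := hVDK s0
    rw [hRK, if_pos hk] at e2
    have hPeq : ∀ s', PK s0 (π s0) s' = P s0 (π s0) s' := by
      intro s'; rw [hPK, if_pos hk]
    simp only [hPeq] at e2
    have key : VDK s0 - VD s0 = γ * ∑ s', P s0 (π s0) s' * (VDK s' - VD s') := by
      rw [e1, e2]
      rw [Finset.mul_sum, Finset.mul_sum, Finset.mul_sum]
      rw [show (R s0 (π s0) + ∑ s', γ * (P s0 (π s0) s' * VDK s')) -
        (R s0 (π s0) + ∑ s', γ * (P s0 (π s0) s' * VD s')) =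
        ∑ s', γ * (P s0 (π s0) s' * VDK s') - ∑ s', γ * (P s0 (π s0) s' * VD s') by ring]
      rw [← Finset.sum_sub_distrib]
      apply Finset.sum_congr rfl
      intro i _; ring
    have hsum : VDK s0 - VD s0 ≤ ∑ s', P s0 (π s0) s' * (VDK s' - VD s') := by
      calc VDK s0 - VD s0 = ∑ s', P s0 (π s0) s' * (VDK s0 - VD s0) := by
            rw [← Finset.sum_mul, hPsum, one_mul]
        _ ≤ ∑ s', P s0 (π s0) s' * (VDK s' - VD s') := by
            apply Finset.sum_le_sum
            intro i _
            exact mul_le_mul_of_nonneg_left (hmin' i) (hPpos _ _ _)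
    -- key: m = γ * (something ≥ m), so m ≥ γ m
    nlinarith
  · -- outside K: self loop gives VDK s0 = Rmax/(1-γ)
    have e2 := hVDK s0
    rw [hRK, if_neg hk] at e2
    have hPeq : ∀ s', PK s0 (π s0) s' = if s' = s0 then 1 else 0 := by
      intro s'; rw [hPK, if_neg hk]
    simp only [hPeq] at e2
    have hsum : ∑ s', (if s' = s0 then (1:ℝ) else 0) * VDK s' = VDK s0 := by
      rw [Finset.sum_congr rfl (fun i _ => by rw [ite_mul, one_mul, zero_mul])]
      simp [Finset.sum_ite_eq' Finset.univ s0 VDK]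
    rw [hsum] at e2
    have hvd0 : VD s0 ≤ VD s1 := hmax' s0
    nlinarith
end
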